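/- arXiv:1906.12256 — 2 statements merged into one kernel-verified Lean document; each statement's English description precedes it below -/
import Mathlib

section
/- For h : {-1,1}^E → {0,1} (E finite) and any subset G ⊆ E, the unnormalized spectral mass satisfies ∑_{S : S ∩ G ≠ ∅} ĥ(S)² ≤ 4 · P[Piv_G(h)], where Piv_G(h) is the event that h can be changed by modifying coordinates only inside G. -/
open Finset
open scoped Classical

noncomputable section

/-- Expectation with respect to the uniform product measure on `{-1,1}^E`. -/
def cubeExp {E : Type*} [Fintype E] [DecidableEq E] (f : (E → Bool) → ℝ) : ℝ :=
  (∑ ω : E → Bool, f ω) / 2 ^ Fintype.card E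

/-- The Walsh character `χ_S(ω) = ∏_{i ∈ S} ω(i)` (with `true ↦ +1`, `false ↦ -1`). -/
def walsh {E : Type*} (S : Finset E) (ω : E → Bool) : ℝ :=
  ∏ i ∈ S, (if ω i then (1 : ℝ) else -1)

/-- The Fourier–Walsh coefficient `ĥ(S) = E[h χ_S]`. -/
def walshCoeff {E : Type*} [Fintype E] [DecidableEq E]
    (h : (E → Bool) → ℝ) (S : Finset E) : ℝ :=
  cubeExp (fun ω => h ω * walsh S ω)

/-- Probability (under the uniform measure) of a set of configurations. -/
def probOf {E : Type*} [Fintype E] [DecidableEq E] (A : (E → Bool) → Prop) : ℝ :=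
  cubeExp (fun ω => if A ω then 1 else 0)

/-- `Piv_G(h)`: the event that `h` can be changed by modifying coordinates only inside `G`. -/
def pivotal {E : Type*} (G : Finset E) (h : (E → Bool) → ℝ) (ω : E → Bool) : Prop :=
  ∃ ω' : E → Bool, (∀ i, i ∉ G → ω' i = ω i) ∧ h ω' ≠ h ω

/-!
Let `A_G h ω` be the average of `h` over all configurations that agree with `ω` off `G`. Averaging
over the coordinates in `G` annihilates exactly the Walsh characters `χ_S` with `S ∩ G ≠ ∅` and
fixes the others, so by Parseval the spectral mass in question is `𝔼[(h - A_G h)²]`. Off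
`Piv_G(h)` the function `h` is constant on the fibre of `ω`, so `h ω = A_G h ω`; on `Piv_G(h)`
both `h ω` and `A_G h ω` lie in `[0, 1]`, so `(h ω - A_G h ω)² ≤ 1`. Hence the mass is even at
most `P[Piv_G(h)]`.
-/

open Function

section Expectation

variable {E : Type*} [Fintype E] [DecidableEq E]

lemma cubeExp_const (c : ℝ) : cubeExp (fun _ : E → Bool => c) = c := by
  rw [cubeExp, Finset.sum_const, Finset.card_univ, Fintype.card_fun, Fintype.card_bool,
    nsmul_eq_mul]
  push_cast
  field_simp

lemma cubeExp_mono {f g : (E → Bool) → ℝ} (hfg : ∀ ω, f ω ≤ g ω) : cubeExp f ≤ cubeExp g :=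
  div_le_div_of_nonneg_right (Finset.sum_le_sum fun ω _ => hfg ω) (by positivity)

lemma cubeExp_mem_Icc {f : (E → Bool) → ℝ} {a b : ℝ} (hf : ∀ ω, f ω ∈ Set.Icc a b) :
    cubeExp f ∈ Set.Icc a b :=
  ⟨cubeExp_const (E := E) a ▸ cubeExp_mono fun ω => (hf ω).1,
    cubeExp_const (E := E) b ▸ cubeExp_mono fun ω => (hf ω).2⟩

lemma probOf_nonneg (A : (E → Bool) → Prop) : 0 ≤ probOf A :=
  cubeExp_const (E := E) 0 ▸ cubeExp_mono fun ω => by split_ifs <;> norm_num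

lemma walshCoeff_sub (f g : (E → Bool) → ℝ) (S : Finset E) :
    walshCoeff (fun ω => f ω - g ω) S = walshCoeff f S - walshCoeff g S := by
  simp only [walshCoeff, cubeExp, sub_mul, Finset.sum_sub_distrib, sub_div]

end Expectation

section Orthogonality

lemma walsh_mul_walsh {E : Type*} (S : Finset E) (ω ω' : E → Bool) :
    walsh S ω * walsh S ω' = ∏ i ∈ S, if ω i = ω' i then (1 : ℝ) else -1 := by
  rw [walsh, walsh, ← Finset.prod_mul_distrib]
  refine Finset.prod_congr rfl fun i _ => ?_
  cases ω i <;> cases ω' i <;> norm_num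

variable {E : Type*} [Fintype E]

lemma sum_walsh_mul_walsh (ω ω' : E → Bool) :
    ∑ S : Finset E, walsh S ω * walsh S ω' = if ω = ω' then (2 : ℝ) ^ Fintype.card E else 0 := by
  simp only [walsh_mul_walsh]
  -- `∑_S ∏_{i ∈ S} s i = ∏_i (1 + s i)`, and a factor vanishes wherever `ω` and `ω'` differ.
  rw [← Finset.powerset_univ, ← Finset.prod_one_add]
  split_ifs with hωω'
  · subst hωω'
    norm_num [Finset.prod_const, Finset.card_univ]
  · obtain ⟨i, hi⟩ := Function.ne_iff.mp hωω'
    exact Finset.prod_eq_zero (Finset.mem_univ i) (by simp [hi])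

variable [DecidableEq E]

lemma sum_walsh_eq_zero {S : Finset E} (hS : S.Nonempty) :
    ∑ σ : E → Bool, walsh S σ = 0 := by
  obtain ⟨i, hi⟩ := hS
  -- The sum factorises over the coordinates, and the factor at `i ∈ S` is `1 + (-1)`.
  have hwalsh : ∀ σ : E → Bool,
      walsh S σ = ∏ j, if j ∈ S then (if σ j then (1 : ℝ) else -1) else 1 :=
    fun σ => (Fintype.prod_ite_mem S _).symm
  rw [Finset.sum_congr rfl fun σ _ => hwalsh σ,
    ← Fintype.prod_sum fun j (b : Bool) => if j ∈ S then (if b then (1 : ℝ) else -1) else 1]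
  exact Finset.prod_eq_zero (Finset.mem_univ i) (by simp [hi])

lemma sum_walshCoeff_mul_walsh (f : (E → Bool) → ℝ) (ω₀ : E → Bool) :
    ∑ S : Finset E, walshCoeff f S * walsh S ω₀ = f ω₀ := by
  simp only [walshCoeff, cubeExp, div_mul_eq_mul_div, ← Finset.sum_div, Finset.sum_mul]
  rw [Finset.sum_comm]
  simp only [mul_assoc, ← Finset.mul_sum, sum_walsh_mul_walsh, mul_ite, mul_zero,
    Finset.sum_ite_eq', Finset.mem_univ, if_true]
  field_simp

lemma cubeExp_sq_eq_sum_walshCoeff_sq (f : (E → Bool) → ℝ) :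
    cubeExp (fun ω => f ω ^ 2) = ∑ S : Finset E, walshCoeff f S ^ 2 := by
  calc cubeExp (fun ω => f ω ^ 2)
      = cubeExp (fun ω => f ω * ∑ S : Finset E, walshCoeff f S * walsh S ω) := by
        simp only [sum_walshCoeff_mul_walsh, sq]
    _ = ∑ S : Finset E, walshCoeff f S * walshCoeff f S := by
        simp only [cubeExp, Finset.mul_sum, Finset.sum_div]
        rw [Finset.sum_comm]
        refine Finset.sum_congr rfl fun S _ => ?_
        have hfactor : ∀ ω, f ω * (walshCoeff f S * walsh S ω) / 2 ^ Fintype.card E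
            = walshCoeff f S * (f ω * walsh S ω / 2 ^ Fintype.card E) := fun ω => by ring
        rw [Finset.sum_congr rfl fun ω _ => hfactor ω, ← Finset.mul_sum, ← Finset.sum_div]
        rfl
    _ = ∑ S : Finset E, walshCoeff f S ^ 2 := by simp only [sq]

end Orthogonality

section Averaging

variable {E : Type*} [DecidableEq E]

lemma piecewise_piecewise_swap (G : Finset E) (ω σ : E → Bool) :
    G.piecewise (G.piecewise ω σ) (G.piecewise σ ω) = ω := by
  funext i
  by_cases hi : i ∈ G <;> simp [hi]

lemma walsh_piecewise (G S : Finset E) (ω σ : E → Bool) :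
    walsh S (G.piecewise σ ω) = walsh (S ∩ G) σ * walsh (S \ G) ω := by
  rw [walsh, walsh, walsh, ← Finset.prod_inter_mul_prod_sdiff S G]
  congr 1
  · exact Finset.prod_congr rfl fun i hi => by simp [(Finset.mem_inter.mp hi).2]
  · exact Finset.prod_congr rfl fun i hi => by simp [(Finset.mem_sdiff.mp hi).2]

variable [Fintype E]

lemma sum_sum_piecewise_swap (G : Finset E) (F : (E → Bool) → (E → Bool) → ℝ) :
    ∑ ω, ∑ σ, F (G.piecewise σ ω) (G.piecewise ω σ) = ∑ ω, ∑ σ, F ω σ := by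
  have hswap : Involutive fun p : (E → Bool) × (E → Bool) =>
      (G.piecewise p.2 p.1, G.piecewise p.1 p.2) := fun p =>
    Prod.ext (piecewise_piecewise_swap G p.1 p.2) (piecewise_piecewise_swap G p.2 p.1)
  rw [← Fintype.sum_prod_type', ← Fintype.sum_prod_type']
  exact hswap.bijective.sum_comp fun p => F p.1 p.2

lemma sum_sum_piecewise_mul_walsh (G S : Finset E) (f : (E → Bool) → ℝ) :
    ∑ ω, ∑ σ, f (G.piecewise σ ω) * walsh S ω
      = (∑ ω, f ω * walsh (S \ G) ω) * ∑ σ, walsh (S ∩ G) σ := by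
  calc ∑ ω, ∑ σ, f (G.piecewise σ ω) * walsh S ω
      = ∑ ω, ∑ σ, f (G.piecewise σ ω)
          * walsh S (G.piecewise (G.piecewise ω σ) (G.piecewise σ ω)) := by
        simp only [piecewise_piecewise_swap]
    _ = ∑ ω, ∑ σ, f ω * walsh S (G.piecewise σ ω) :=
        sum_sum_piecewise_swap G fun ω σ => f ω * walsh S (G.piecewise σ ω)
    _ = (∑ ω, f ω * walsh (S \ G) ω) * ∑ σ, walsh (S ∩ G) σ := by
        simp only [walsh_piecewise, Finset.sum_mul_sum]
        exact Finset.sum_congr rfl fun ω _ => Finset.sum_congr rfl fun σ _ => by ring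

-- The conditional expectation of `f` given the coordinates outside `G`.
def averageOn (G : Finset E) (f : (E → Bool) → ℝ) (ω : E → Bool) : ℝ :=
  cubeExp fun σ => f (G.piecewise σ ω)

lemma walshCoeff_averageOn (G : Finset E) (f : (E → Bool) → ℝ) (S : Finset E) :
    walshCoeff (averageOn G f) S = if (S ∩ G).Nonempty then 0 else walshCoeff f S := by
  have hdouble : walshCoeff (averageOn G f) S
      = (∑ ω, f ω * walsh (S \ G) ω) * (∑ σ, walsh (S ∩ G) σ)
          / 2 ^ Fintype.card E / 2 ^ Fintype.card E := by
    simp only [walshCoeff, averageOn, cubeExp, div_mul_eq_mul_div, Finset.sum_mul,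
      ← Finset.sum_div, sum_sum_piecewise_mul_walsh]
  rw [hdouble]
  split_ifs with hSG
  · rw [sum_walsh_eq_zero hSG, mul_zero, zero_div, zero_div]
  · rw [Finset.not_nonempty_iff_eq_empty] at hSG
    have hS : S \ G = S := by
      rw [Finset.sdiff_eq_self_iff_disjoint, Finset.disjoint_iff_inter_eq_empty, hSG]
    simp only [hS, hSG, walsh, Finset.prod_empty, Finset.sum_const, Finset.card_univ,
      Fintype.card_fun, Fintype.card_bool, nsmul_eq_mul, mul_one, walshCoeff, cubeExp]
    push_cast
    field_simp

lemma averageOn_eq_of_not_pivotal {G : Finset E} {f : (E → Bool) → ℝ} {ω : E → Bool}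
    (hω : ¬ pivotal G f ω) : averageOn G f ω = f ω := by
  have hconst : ∀ σ, f (G.piecewise σ ω) = f ω := fun σ => by
    by_contra hne
    exact hω ⟨G.piecewise σ ω, fun i hi => Finset.piecewise_eq_of_notMem G σ ω hi, hne⟩
  simp only [averageOn, hconst, cubeExp_const]

lemma sq_sub_averageOn_le_indicator_pivotal {G : Finset E} {f : (E → Bool) → ℝ}
    (hf : ∀ ω, f ω ∈ Set.Icc 0 1) (ω : E → Bool) :
    (f ω - averageOn G f ω) ^ 2 ≤ if pivotal G f ω then 1 else 0 := by
  split_ifs with hω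
  · obtain ⟨hf0, hf1⟩ := hf ω
    obtain ⟨havg0, havg1⟩ := cubeExp_mem_Icc fun σ => hf (G.piecewise σ ω)
    rw [averageOn]
    nlinarith
  · rw [averageOn_eq_of_not_pivotal hω, sub_self, sq, mul_zero]

end Averaging

/-- The spectral mass of the sets intersecting `G` is at most `4 P[Piv_G(h)]`. -/
theorem spectral_mass_inter_le_pivotal {E : Type*} [Fintype E] [DecidableEq E]
    (h : (E → Bool) → ℝ) (h01 : ∀ ω, h ω = 0 ∨ h ω = 1) (G : Finset E) :
    ∑ S ∈ Finset.univ.filter (fun S : Finset E => (S ∩ G).Nonempty),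
        walshCoeff h S ^ 2
      ≤ 4 * probOf (pivotal G h) := by
  have hIcc : ∀ ω, h ω ∈ Set.Icc 0 1 := fun ω => by
    rcases h01 ω with h0 | h1 <;> simp [*]
  have hmass : ∑ S ∈ Finset.univ.filter (fun S : Finset E => (S ∩ G).Nonempty),
      walshCoeff h S ^ 2 = cubeExp fun ω => (h ω - averageOn G h ω) ^ 2 := by
    rw [cubeExp_sq_eq_sum_walshCoeff_sq, Finset.sum_filter]
    refine Finset.sum_congr rfl fun S _ => ?_
    rw [walshCoeff_sub, walshCoeff_averageOn]
    split_ifs <;> simp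
  calc _ = cubeExp fun ω => (h ω - averageOn G h ω) ^ 2 := hmass
    _ ≤ probOf (pivotal G h) := cubeExp_mono (sq_sub_averageOn_le_indicator_pivotal hIcc)
    _ ≤ 4 * probOf (pivotal G h) := by linarith [probOf_nonneg (pivotal G h)]
end
end

section
/- Let n ∈ ℕ and let x, y be random variables in {0,1}^n with x_i ≥ y_i for all i; set X = ∑ x_i and Y = ∑ y_i. Suppose there is a ∈ (0,1] such that for every j and every I ⊆ {1,…,n}∖{j}, P[y_j = 1 | y_i = 0 ∀ i ∈ I] ≥ a · P[x_j = 1 | y_i = 0 ∀ i ∈ I]. Then P[Y = 0 | X > 0] ≤ (1/a) · E[exp(−aX/e) | X > 0]. -/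
/-!
Put `t = e⁻¹`, `Yⱼ = #{i ≠ j | yᵢ = 1}` and, for `b = x, y`, `φ_b = ∑ⱼ 1[bⱼ = 1] t ^ Yⱼ`.
Expanding `t ^ Yⱼ = ∏_{i ≠ j} ((1 - t) 1[yᵢ = 0] + t)` writes `E[φ_b]` as a nonnegative
combination of the probabilities `P[bⱼ = 1, yᵢ = 0 ∀ i ∈ I]` with `j ∉ I`, so the hypothesis
gives `a E[φ_x] ≤ E[φ_y]`. Since `φ_y = Y t^(Y-1)` and `φ_x = φ_y + (X - Y) t^Y`, an elementary
inequality gives pointwise `a 1[X > 0, Y = 0] + a t φ_y ≤ 1[X > 0] exp(-aX/e) + a² t φ_x`, and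
taking expectations yields `a P[X > 0, Y = 0] ≤ E[exp(-aX/e); X > 0]`.
-/

open MeasureTheory ProbabilityTheory Finset

lemma le_exp_neg_add_mul {a : ℝ} (ha0 : 0 ≤ a) (ha1 : a ≤ 1) (u : ℝ) :
    a ≤ Real.exp (-u) + a * u := by
  nlinarith [Real.add_one_le_exp (-u), Real.exp_pos (-u)]

lemma le_exp_one_sub_exp_neg_one_mul {v : ℝ} (hv : 0 ≤ v) :
    v ≤ Real.exp ((1 - Real.exp (-1)) * v) := by
  have he : Real.exp 1 * Real.exp (-1) = 1 := by rw [← Real.exp_add]; simp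
  have h2e : 2 ≤ Real.exp 1 := by linarith [Real.add_one_le_exp 1]
  have h := Real.add_one_le_exp ((1 - Real.exp (-1)) * v - 1)
  rw [Real.exp_sub, le_div_iff₀ (Real.exp_pos 1)] at h
  nlinarith

lemma one_sub_mul_mul_exp_neg_le {a m k : ℝ} (ha0 : 0 ≤ a) (ha1 : a ≤ 1) (hm : 0 ≤ m)
    (hmk : m ≤ k) :
    (1 - a) * a * m * Real.exp (-m)
      ≤ Real.exp (-(a * k) / Real.exp 1) + a ^ 2 * (k - m) * Real.exp (-(m + 1)) := by
  set t := Real.exp (-1)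
  have ht : 0 < t := Real.exp_pos _
  rw [div_eq_mul_inv, ← Real.exp_neg, neg_add, Real.exp_add (-m)]
  have hexp := Real.exp_pos (-(a * k) * t)
  have hexpm := Real.exp_pos (-m)
  rcases le_or_gt ((1 - a) * m) (a * (k - m) * t) with h | h
  · nlinarith [mul_le_mul_of_nonneg_right h (by positivity : 0 ≤ a * Real.exp (-m))]
  · -- `k` is so close to `m` that the exponential term alone suffices
    have hk : Real.exp ((1 - t) * (a * m) + -m) ≤ Real.exp (-(a * k) * t) := by
      rw [Real.exp_le_exp]; nlinarith
    have hv := le_exp_one_sub_exp_neg_one_mul (mul_nonneg ha0 hm)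
    rw [Real.exp_add] at hk
    have : 0 ≤ a ^ 2 * (k - m) * (Real.exp (-m) * t) := by
      have : 0 ≤ k - m := by linarith
      positivity
    nlinarith [mul_le_mul_of_nonneg_right hv hexpm.le]

lemma mul_sum_pow_card_erase {ι R : Type*} [DecidableEq ι] [CommSemiring R] (t : R)
    {O P : Finset ι} (hOP : O ⊆ P) :
    t * ∑ j ∈ P, t ^ #(O.erase j) = #O * t ^ #O + #(P \ O) * t ^ (#O + 1) := by
  rw [← sum_sdiff hOP, mul_add, add_comm, mul_sum, mul_sum]
  congr 1
  · rw [sum_congr rfl fun j hj => by rw [← pow_succ', card_erase_add_one hj], sum_const,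
      nsmul_eq_mul]
  · rw [sum_congr rfl fun j hj => by rw [erase_eq_of_notMem (mem_sdiff.1 hj).2, ← pow_succ'],
      sum_const, nsmul_eq_mul]

lemma exp_neg_one_pow (n : ℕ) : Real.exp (-1) ^ n = Real.exp (-n) := by
  rw [← Real.exp_nat_mul, mul_neg_one]

lemma gps_pointwise_bound {ι : Type*} [Fintype ι] [DecidableEq ι] {a : ℝ} (ha0 : 0 ≤ a)
    (ha1 : a ≤ 1) (xb yb : ι → Bool) (hle : ∀ i, yb i ≤ xb i) :
    (if 0 < #{i | xb i = true} ∧ #{i | yb i = true} = 0 then a else 0)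
        + a * Real.exp (-1) * ∑ j, (if yb j = true then
            Real.exp (-1) ^ #{i ∈ univ.erase j | yb i = true} else 0)
      ≤ (if 0 < #{i | xb i = true} then
            Real.exp (-(a * #{i | xb i = true}) / Real.exp 1) else 0)
        + a ^ 2 * Real.exp (-1) * ∑ j, (if xb j = true then
            Real.exp (-1) ^ #{i ∈ univ.erase j | yb i = true} else 0) := by
  simp only [← sum_filter, filter_erase]
  set O : Finset ι := {i | yb i = true}
  set P : Finset ι := {i | xb i = true}
  have hOP : O ⊆ P := fun i hi => by
    simp only [O, P, mem_filter, mem_univ, true_and] at hi ⊢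
    exact Bool.le_iff_imp.1 (hle i) hi
  rw [mul_assoc, mul_assoc, mul_sum_pow_card_erase _ subset_rfl, mul_sum_pow_card_erase _ hOP,
    sdiff_self, bot_eq_empty, card_empty, Nat.cast_zero, zero_mul, add_zero,
    cast_card_sdiff hOP, exp_neg_one_pow, exp_neg_one_pow]
  rcases (#P).eq_zero_or_pos with hP | hP
  · have hO : #O = 0 := Nat.eq_zero_of_le_zero (hP ▸ card_le_card hOP)
    simp [hP, hO]
  rcases (#O).eq_zero_or_pos with hO | hO
  · simp only [hP, hO, and_self, if_true, CharP.cast_eq_zero, zero_mul, zero_add, mul_zero,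
      sub_zero, add_zero, Nat.cast_one, Real.exp_neg]
    convert le_exp_neg_add_mul ha0 ha1 (a * #P / Real.exp 1) using 2
    · rw [neg_div]
    · ring
  · simp only [hP, hO.ne', and_false, if_false, if_true]
    push_cast
    nlinarith [one_sub_mul_mul_exp_neg_le ha0 ha1 (Nat.cast_nonneg #O)
      (Nat.cast_le.2 (card_le_card hOP))]

lemma pow_card_filter_eq_sum_powerset {ι R : Type*} [DecidableEq ι] [CommRing R] (t : R)
    (s : Finset ι) (b : ι → Bool) :
    t ^ #{i ∈ s | b i = true}
      = ∑ I ∈ s.powerset, if ∀ i ∈ I, b i = false then (1 - t) ^ #I * t ^ #(s \ I) else 0 := by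
  have hfactor : ∀ i, (if b i = true then t else 1)
      = (1 - t) * (if b i = false then 1 else 0) + t := fun i => by cases b i <;> simp
  rw [← prod_const, prod_filter, prod_congr rfl fun i _ => hfactor i, prod_add]
  refine sum_congr rfl fun I _ => ?_
  rw [prod_mul_distrib, prod_boole, prod_const, prod_const]
  split_ifs <;> simp

lemma measurableSet_forall_eq_false {Ω ι : Type*} [MeasurableSpace Ω] {y : Ω → ι → Bool}
    (hy : ∀ i, Measurable fun ω => y ω i) (I : Finset ι) :
    MeasurableSet {ω | ∀ i ∈ I, y ω i = false} := by
  simp only [Set.ofPred_forall]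
  exact .biInter I.countable_toSet fun i _ => hy i (measurableSet_singleton false)

lemma measurableSet_setOf_card_filter {Ω ι : Type*} [MeasurableSpace Ω] [Fintype ι]
    {x : Ω → ι → Bool} (hx : ∀ i, Measurable fun ω => x ω i) (p : ℕ → Prop) :
    MeasurableSet {ω | p #{i | x ω i = true}} :=
  measurable_pi_lambda _ hx (.of_discrete (s := {v : ι → Bool | p #{i | v i = true}}))

section TestFunction

variable {Ω ι : Type*} [DecidableEq ι] (s : Finset ι) (t : ℝ)

lemma ite_pow_card_filter_eq_sum_indicator (y : Ω → ι → Bool) (b : Ω → Bool) (ω : Ω) :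
    (if b ω = true then t ^ #{i ∈ s | y ω i = true} else 0)
      = ∑ I ∈ s.powerset, ({ω | ∀ i ∈ I, y ω i = false} ∩ {ω | b ω = true}).indicator
          (fun _ => (1 - t) ^ #I * t ^ #(s \ I)) ω := by
  simp only [pow_card_filter_eq_sum_powerset, Set.indicator_apply, Set.mem_inter_iff,
    Set.mem_ofPred_eq]
  split_ifs with hb <;> simp [hb]

variable [MeasurableSpace Ω] {y : Ω → ι → Bool} (μ : Measure Ω) [IsFiniteMeasure μ]
  {b : Ω → Bool}

lemma integrable_ite_pow_card_filter (hy : ∀ i, Measurable fun ω => y ω i)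
    (hb : Measurable b) :
    Integrable (fun ω => if b ω = true then t ^ #{i ∈ s | y ω i = true} else 0) μ := by
  simp only [ite_pow_card_filter_eq_sum_indicator s t y b]
  exact integrable_finsetSum _ fun I _ => (integrable_const _).indicator
    ((measurableSet_forall_eq_false hy I).inter (hb (measurableSet_singleton true)))

lemma integral_ite_pow_card_filter (hy : ∀ i, Measurable fun ω => y ω i)
    (hb : Measurable b) :
    ∫ ω, (if b ω = true then t ^ #{i ∈ s | y ω i = true} else 0) ∂μ
      = ∑ I ∈ s.powerset, (1 - t) ^ #I * t ^ #(s \ I)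
          * μ.real ({ω | ∀ i ∈ I, y ω i = false} ∩ {ω | b ω = true}) := by
  have hZ : ∀ I : Finset ι,
      MeasurableSet ({ω | ∀ i ∈ I, y ω i = false} ∩ {ω | b ω = true}) := fun I =>
    (measurableSet_forall_eq_false hy I).inter (hb (measurableSet_singleton true))
  simp only [ite_pow_card_filter_eq_sum_indicator s t y b]
  rw [integral_finsetSum _ fun I _ => (integrable_const _).indicator (hZ I)]
  exact sum_congr rfl fun I _ => by rw [integral_indicator_const _ (hZ I), smul_eq_mul, mul_comm]

lemma mul_integral_ite_pow_card_filter_le (hy : ∀ i, Measurable fun ω => y ω i)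
    (hb : Measurable b) {c : Ω → Bool} (hc : Measurable c) (ht0 : 0 ≤ t) (ht1 : t ≤ 1) {a : ℝ}
    (h : ∀ I ⊆ s, a * μ.real ({ω | ∀ i ∈ I, y ω i = false} ∩ {ω | b ω = true})
      ≤ μ.real ({ω | ∀ i ∈ I, y ω i = false} ∩ {ω | c ω = true})) :
    a * ∫ ω, (if b ω = true then t ^ #{i ∈ s | y ω i = true} else 0) ∂μ
      ≤ ∫ ω, (if c ω = true then t ^ #{i ∈ s | y ω i = true} else 0) ∂μ := by
  rw [integral_ite_pow_card_filter s t μ hy hb, integral_ite_pow_card_filter s t μ hy hc,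
    mul_sum]
  refine sum_le_sum fun I hI => ?_
  rw [mul_left_comm]
  have : 0 ≤ 1 - t := by linarith
  exact mul_le_mul_of_nonneg_left (h I (mem_powerset.1 hI)) (by positivity)

end TestFunction

section Conditioning

variable {Ω : Type*} [MeasurableSpace Ω] {μ : Measure Ω} [IsFiniteMeasure μ]

lemma mul_measureReal_inter_le_of_cond {s A B : Set Ω} (hs : MeasurableSet s) {a : ℝ}
    (ha : 0 ≤ a) (h : ENNReal.ofReal a * μ[A|s] ≤ μ[B|s]) :
    a * μ.real (s ∩ A) ≤ μ.real (s ∩ B) := by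
  have h' := mul_le_mul_left h (μ s)
  rw [mul_assoc, cond_mul_eq_inter hs, cond_mul_eq_inter hs] at h'
  simpa [measureReal_def, ENNReal.toReal_mul, ENNReal.toReal_ofReal ha] using
    ENNReal.toReal_mono (measure_ne_top μ _) h'

lemma cond_le_ofReal_of_mul_measureReal_inter_le {A B : Set Ω} (hA : MeasurableSet A) {a : ℝ}
    (ha : 0 < a) {f : Ω → ℝ} (h : a * μ.real (A ∩ B) ≤ ∫ ω in A, f ω ∂μ) :
    μ[B|A] ≤ ENNReal.ofReal ((1 / a) * ∫ ω, f ω ∂μ[|A]) := by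
  rcases eq_or_ne (μ A) 0 with hA0 | hA0
  · simp [cond_eq_zero_of_meas_eq_zero hA0]
  rw [cond_apply hA, show μ[|A] = (μ A)⁻¹ • μ.restrict A from rfl, integral_smul_measure,
    smul_eq_mul, ENNReal.toReal_inv, ← ENNReal.ofReal_toReal (a := (μ A)⁻¹ * μ (A ∩ B))
      (ENNReal.mul_ne_top (ENNReal.inv_ne_top.2 hA0) (measure_ne_top μ _)),
    ENNReal.toReal_mul, ENNReal.toReal_inv]
  refine ENNReal.ofReal_le_ofReal ?_
  rw [one_div, mul_left_comm]
  refine mul_le_mul_of_nonneg_left ?_ (inv_nonneg.2 ENNReal.toReal_nonneg)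
  rwa [le_inv_mul_iff₀ ha]

end Conditioning

theorem gps_mul_measureReal_le_setIntegral {Ω ι : Type*} [MeasurableSpace Ω] [Fintype ι]
    [DecidableEq ι] (μ : Measure Ω) [IsFiniteMeasure μ] (x y : Ω → ι → Bool)
    (hx : ∀ i, Measurable fun ω => x ω i) (hy : ∀ i, Measurable fun ω => y ω i)
    (hle : ∀ ω i, y ω i ≤ x ω i) {a : ℝ} (ha0 : 0 ≤ a) (ha1 : a ≤ 1)
    (hcons : ∀ (j : ι) (I : Finset ι), j ∉ I →
      a * μ.real ({ω | ∀ i ∈ I, y ω i = false} ∩ {ω | x ω j = true})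
        ≤ μ.real ({ω | ∀ i ∈ I, y ω i = false} ∩ {ω | y ω j = true})) :
    a * μ.real ({ω | 0 < #{i | x ω i = true}} ∩ {ω | #{i | y ω i = true} = 0})
      ≤ ∫ ω in {ω | 0 < #{i | x ω i = true}},
          Real.exp (-(a * #{i | x ω i = true}) / Real.exp 1) ∂μ := by
  set t := Real.exp (-1)
  set A : Set Ω := {ω | 0 < #{i | x ω i = true}}
  set B : Set Ω := {ω | #{i | y ω i = true} = 0}
  set f : Ω → ℝ := fun ω => Real.exp (-(a * #{i | x ω i = true}) / Real.exp 1)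
  set T : (Ω → ι → Bool) → ι → Ω → ℝ := fun b j ω =>
    if b ω j = true then t ^ #{i ∈ univ.erase j | y ω i = true} else 0
  have hA : MeasurableSet A := measurableSet_setOf_card_filter hx _
  have hB : MeasurableSet B := measurableSet_setOf_card_filter hy (· = 0)
  have hfA : Integrable (A.indicator f) μ :=
    ((Integrable.of_finite (μ := μ.map x)
      (f := fun v : ι → Bool => Real.exp (-(a * #{i | v i = true}) / Real.exp 1))).comp_measurable
        (measurable_pi_lambda _ hx)).indicator hA
  have hT : ∀ b : Ω → ι → Bool, (∀ i, Measurable fun ω => b ω i) → ∀ j, Integrable (T b j) μ :=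
    fun b hb j => integrable_ite_pow_card_filter _ t μ hy (hb j)
  have hTsum : ∀ b : Ω → ι → Bool, (∀ i, Measurable fun ω => b ω i) →
      Integrable (fun ω => ∑ j, T b j ω) μ :=
    fun b hb => integrable_finsetSum _ fun j _ => hT b hb j
  have hpt : ∀ ω, (A ∩ B).indicator (fun _ => a) ω + a * t * ∑ j, T y j ω
      ≤ A.indicator f ω + a ^ 2 * t * ∑ j, T x j ω := fun ω => by
    simp only [Set.indicator_apply]
    exact gps_pointwise_bound ha0 ha1 (x ω) (y ω) (hle ω)
  have hcmp : ∀ j, a * ∫ ω, T x j ω ∂μ ≤ ∫ ω, T y j ω ∂μ := fun j =>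
    mul_integral_ite_pow_card_filter_le _ t μ hy (hx j) (hy j) (Real.exp_pos _).le
      (Real.exp_le_one_iff.2 (by norm_num)) fun I hI => hcons j I fun hj => by simpa using hI hj
  have hAB : Integrable ((A ∩ B).indicator fun _ => a) μ :=
    (integrable_const a).indicator (hA.inter hB)
  have hmono : ∫ ω, (A ∩ B).indicator (fun _ => a) ω + a * t * ∑ j, T y j ω ∂μ
      ≤ ∫ ω, A.indicator f ω + a ^ 2 * t * ∑ j, T x j ω ∂μ :=
    integral_mono (hAB.add ((hTsum y hy).const_mul _)) (hfA.add ((hTsum x hx).const_mul _)) hpt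
  rw [integral_add hAB ((hTsum y hy).const_mul _), integral_add hfA ((hTsum x hx).const_mul _),
    integral_const_mul, integral_const_mul, integral_indicator_const _ (hA.inter hB),
    integral_indicator hA,
    integral_finsetSum _ fun j _ => hT y hy j, integral_finsetSum _ fun j _ => hT x hx j,
    smul_eq_mul] at hmono
  have hsum : a * ∑ j, ∫ ω, T x j ω ∂μ ≤ ∑ j, ∫ ω, T y j ω ∂μ := by
    rw [mul_sum]; exact sum_le_sum fun j _ => hcmp j
  nlinarith [mul_le_mul_of_nonneg_left hsum (mul_nonneg ha0 (Real.exp_pos (-1)).le)]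

/-- Proposition 6.1 of Garban–Pete–Schramm: let `x, y : Ω → {0,1}ⁿ` (encoded with
booleans) with `y ≤ x` pointwise, `X = ∑ xᵢ`, `Y = ∑ yᵢ`. If for some `a ∈ (0,1]`, for
every `j` and every `I ⊆ {1,…,n} ∖ {j}` one has
`P[y_j = 1 | y_i = 0 ∀ i ∈ I] ≥ a · P[x_j = 1 | y_i = 0 ∀ i ∈ I]`, then
`P[Y = 0 | X > 0] ≤ (1/a) · E[exp(-aX/e) | X > 0]`. -/
theorem gps_large_deviation {Ω : Type*} [MeasurableSpace Ω] (μ : Measure Ω)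
    [IsProbabilityMeasure μ] (n : ℕ) (x y : Ω → Fin n → Bool)
    (hx : ∀ i, Measurable fun ω => x ω i) (hy : ∀ i, Measurable fun ω => y ω i)
    (hle : ∀ ω i, y ω i ≤ x ω i)
    (a : ℝ) (ha : 0 < a) (ha1 : a ≤ 1)
    (hcond : ∀ (j : Fin n) (I : Finset (Fin n)), j ∉ I →
      ENNReal.ofReal a *
          (μ[|{ω | ∀ i ∈ I, y ω i = false}]) {ω | x ω j = true}
        ≤ (μ[|{ω | ∀ i ∈ I, y ω i = false}]) {ω | y ω j = true}) :
    (μ[|{ω | 0 < (Finset.univ.filter fun i => x ω i = true).card}])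
        {ω | (Finset.univ.filter fun i => y ω i = true).card = 0}
      ≤ ENNReal.ofReal ((1 / a) *
          ∫ ω, Real.exp (-(a * ((Finset.univ.filter fun i => x ω i = true).card : ℝ))
              / Real.exp 1)
            ∂(μ[|{ω | 0 < (Finset.univ.filter fun i => x ω i = true).card}])) := by
  refine cond_le_ofReal_of_mul_measureReal_inter_le (measurableSet_setOf_card_filter hx _) ha ?_
  exact gps_mul_measureReal_le_setIntegral μ x y hx hy hle ha.le ha1 fun j I hj =>
    mul_measureReal_inter_le_of_cond (measurableSet_forall_eq_false hy I) ha.le (hcond j I hj)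
end
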